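/- Let h ≤ H < Q be positive integers with Q ≪ x and H = o(x) as x → ∞, and let f, g' : ℕ → ℂ be essentially bounded. Then ∑_{1 ≤ a ≤ H} ∑_{H < q ≤ Q} g'(q) ∑_{x < n ≤ x+h, n ≡ a mod q} f(n) = ( ∑_{H < q ≤ Q, {x/q} ≤ H/q} g'(q) ) · ∑_{x < n ≤ x+h} f(n) + O_ε(x^ε h²). -/

import Mathlib

/-!
Swapping the sums over `a` and `q`, the left-hand side becomes
`∑_q g'(q) ∑_{x < n ≤ x+h, n mod q ∈ [1, H]} f(n)`, while `{x/q} ≤ H/q` says `x mod q ≤ H`.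
As `q > H`, for `x < n ≤ x + h` the residue `n mod q` lies in `[1, H]` exactly when
`x mod q ≤ H`, unless `q` has a multiple in `[x - H, x - H + h)` or in `(x, x + h]`.
So only the divisors of these `2h` numbers, all `≤ 2x`, contribute to the difference:
there are `≪ h x^ε` of them by the divisor bound, each contributing `≪ h x^ε`.
-/

open Finset Filter Asymptotics

/-- `f` is essentially bounded: for every `ε > 0`, `f n ≪_ε n^ε`. -/
def EssBdd (f : ℕ → ℂ) : Prop :=
  ∀ ε : ℝ, 0 < ε → ∃ C : ℝ, ∀ n : ℕ, 1 ≤ n → ‖f n‖ ≤ C * (n : ℝ) ^ ε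

lemma add_one_le_div_sub_one_mul_pow {r : ℝ} (hr : 1 < r) (k : ℕ) :
    (k + 1 : ℝ) ≤ r / (r - 1) * r ^ k := by
  have hbernoulli : 1 + k * (r - 1) ≤ r ^ k := by
    simpa using one_add_mul_le_pow (by linarith : -2 ≤ r - 1) k
  have hone : 1 ≤ r ^ k := one_le_pow₀ hr.le
  rw [div_mul_eq_mul_div, le_div_iff₀ (by linarith)]
  nlinarith

/-- Beyond `⌈2 ^ δ⁻¹⌉` we have `p ^ δ ≥ 2`, so `k + 1 ≤ 2 ^ k` needs no constant. -/
lemma add_one_le_ite_mul_rpow_pow {δ : ℝ} (hδ : 0 < δ) {p : ℕ} (hp : 2 ≤ p) (k : ℕ) :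
    (k + 1 : ℝ) ≤
      (if p < ⌈(2 : ℝ) ^ δ⁻¹⌉₊ then 2 ^ δ / (2 ^ δ - 1) else 1) * ((p : ℝ) ^ δ) ^ k := by
  have hp2 : (2 : ℝ) ≤ p := by exact_mod_cast hp
  have h2δ : 1 < (2 : ℝ) ^ δ := Real.one_lt_rpow (by norm_num) hδ
  split_ifs with hpK
  · calc (k + 1 : ℝ) ≤ 2 ^ δ / (2 ^ δ - 1) * ((2 : ℝ) ^ δ) ^ k :=
          add_one_le_div_sub_one_mul_pow h2δ k
      _ ≤ 2 ^ δ / (2 ^ δ - 1) * ((p : ℝ) ^ δ) ^ k := by gcongr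
  · have h2p : 2 ≤ (p : ℝ) ^ δ := by
      calc (2 : ℝ) = ((2 : ℝ) ^ δ⁻¹) ^ δ := by
            rw [← Real.rpow_mul (by norm_num), inv_mul_cancel₀ hδ.ne', Real.rpow_one]
        _ ≤ (p : ℝ) ^ δ := by
            gcongr
            exact (Nat.le_ceil _).trans (by exact_mod_cast not_lt.1 hpK)
    rw [one_mul]
    exact (show (k + 1 : ℝ) ≤ 2 ^ k by exact_mod_cast Nat.lt_two_pow_self).trans (by gcongr)

lemma Nat.cast_rpow_eq_prod_primeFactors {n : ℕ} (hn : n ≠ 0) (δ : ℝ) :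
    (n : ℝ) ^ δ = ∏ p ∈ n.primeFactors, ((p : ℝ) ^ δ) ^ n.factorization p := by
  conv_lhs => rw [Nat.prod_primeFactors_pow_factorization hn]
  push_cast
  rw [← Real.finsetProd_rpow _ _ fun p _ => by positivity]
  refine prod_congr rfl fun p _ => ?_
  rw [← Real.rpow_natCast, ← Real.rpow_natCast, ← Real.rpow_mul (by positivity),
    ← Real.rpow_mul (by positivity), mul_comm]

theorem essBdd_card_divisors : EssBdd fun n => (#n.divisors : ℂ) := by
  intro δ hδ
  set M : ℝ := 2 ^ δ / (2 ^ δ - 1)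
  have hM : 1 ≤ M := by
    have : 1 < (2 : ℝ) ^ δ := Real.one_lt_rpow (by norm_num) hδ
    rw [le_div_iff₀ (by linarith)]
    linarith
  set K := ⌈(2 : ℝ) ^ δ⁻¹⌉₊
  refine ⟨M ^ K, fun n hn => ?_⟩
  have hn0 : n ≠ 0 := by omega
  have hsmall : ∏ p ∈ n.primeFactors, (if p < K then M else 1) ≤ M ^ K := by
    rw [prod_ite, prod_const, prod_const_one, mul_one]
    exact pow_le_pow_right₀ hM <| (card_le_card fun p hp => mem_range.2 (mem_filter.1 hp).2).trans
      (card_range K).le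
  rw [Complex.norm_natCast, Nat.card_divisors hn0, Nat.cast_rpow_eq_prod_primeFactors hn0]
  push_cast
  calc ∏ p ∈ n.primeFactors, (n.factorization p + 1 : ℝ)
      ≤ ∏ p ∈ n.primeFactors, (if p < K then M else 1) * ((p : ℝ) ^ δ) ^ n.factorization p :=
        prod_le_prod (fun _ _ => by positivity) fun p hp =>
          add_one_le_ite_mul_rpow_pow hδ (Nat.prime_of_mem_primeFactors hp).two_le _
    _ ≤ M ^ K * ∏ p ∈ n.primeFactors, ((p : ℝ) ^ δ) ^ n.factorization p := by
        rw [prod_mul_distrib]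
        gcongr

lemma EssBdd.exists_norm_le_mul_rpow {f : ℕ → ℂ} (hf : EssBdd f) {δ : ℝ} (hδ : 0 < δ) :
    ∃ C : ℝ, ∀ N n : ℕ, n ∈ Icc 1 N → ‖f n‖ ≤ C * (N : ℝ) ^ δ := by
  obtain ⟨C, hC⟩ := hf δ hδ
  have hC0 : 0 ≤ C := by simpa using (norm_nonneg _).trans (hC 1 le_rfl)
  refine ⟨C, fun N n hn => (hC n (mem_Icc.1 hn).1).trans ?_⟩
  gcongr
  exact_mod_cast (mem_Icc.1 hn).2

lemma sum_Icc_sum_filter_mod_eq {M : Type*} [AddCommMonoid M] (f : ℕ → M) (s : Finset ℕ)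
    {H q : ℕ} (hHq : H < q) :
    ∑ a ∈ Icc 1 H, ∑ n ∈ s with n % q = a % q, f n = ∑ n ∈ s with n % q ∈ Icc 1 H, f n := by
  rw [← sum_fiberwise_eq_sum_filter]
  refine sum_congr rfl fun a ha => ?_
  rw [Nat.mod_eq_of_lt ((mem_Icc.1 ha).2.trans_lt hHq)]

lemma Int.fract_natCast_div_le_div_iff {x q H : ℕ} (hq : 0 < q) :
    Int.fract ((x : ℝ) / q) ≤ H / q ↔ x % q ≤ H := by
  rw [Int.fract_div_natCast_eq_div_natCast_mod, div_le_div_iff_of_pos_right (by exact_mod_cast hq)]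
  exact Nat.cast_le

lemma pinch_error_eq (f g : ℕ → ℂ) (s : Finset ℕ) (x H Q : ℕ) :
    ∑ a ∈ Icc 1 H, ∑ q ∈ Ioc H Q, g q * ∑ n ∈ s with n % q = a % q, f n
        - (∑ q ∈ (Ioc H Q).filter (fun q : ℕ => Int.fract ((x : ℝ) / (q : ℝ)) ≤ (H : ℝ) / (q : ℝ)),
          g q) * ∑ n ∈ s, f n
      = ∑ q ∈ Ioc H Q, g q *
          (∑ n ∈ s with n % q ∈ Icc 1 H, f n - if x % q ≤ H then ∑ n ∈ s, f n else 0) := by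
  rw [sum_comm, sum_filter, sum_mul, ← sum_sub_distrib]
  refine sum_congr rfl fun q hq => ?_
  have hHq := (mem_Ioc.1 hq).1
  rw [← mul_sum, sum_Icc_sum_filter_mod_eq f s hHq, mul_sub, mul_ite, mul_zero, ite_mul, zero_mul]
  simp only [Int.fract_natCast_div_le_div_iff (show 0 < q by omega)]

lemma mod_mem_Icc_iff_of_not_dvd {x h H q : ℕ} (hHq : H < q) (hHx : H ≤ x)
    (hlow : ∀ m ∈ Ico (x - H) (x - H + h), ¬q ∣ m) (hhigh : ∀ m ∈ Ioc x (x + h), ¬q ∣ m)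
    {n : ℕ} (hn : n ∈ Ioc x (x + h)) : n % q ∈ Icc 1 H ↔ x % q ≤ H := by
  obtain ⟨j, rfl⟩ : ∃ j, n = x + j := ⟨n - x, by have := (mem_Ioc.1 hn).1; omega⟩
  -- the multiples of `q` around `x` are `x - x % q` and `x + (q - x % q)`
  have hj := mem_Ioc.1 hn
  have hdiv := Nat.div_add_mod x q
  have hr : x % q < q := Nat.mod_lt x (by omega)
  by_cases hwrap : x % q + j < q
  · have hnq : (x + j) % q = x % q + j := by
      rw [Nat.add_mod, Nat.mod_eq_of_lt (show j < q by omega), Nat.mod_eq_of_lt hwrap]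
    rw [hnq, mem_Icc]
    refine ⟨fun hmem => by omega, fun hxH => ⟨by omega, ?_⟩⟩
    by_contra hgt
    exact hlow (x - x % q) (mem_Ico.2 ⟨by omega, by omega⟩) ⟨x / q, by omega⟩
  · exact absurd ⟨x / q + 1, by rw [mul_add_one]; omega⟩
      (hhigh (x + (q - x % q)) (mem_Ioc.2 ⟨by omega, by omega⟩))

lemma sum_filter_mod_sub_ite_eq_zero (f : ℕ → ℂ) {x h H q : ℕ} (hHq : H < q) (hHx : H ≤ x)
    (hlow : ∀ m ∈ Ico (x - H) (x - H + h), ¬q ∣ m) (hhigh : ∀ m ∈ Ioc x (x + h), ¬q ∣ m) :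
    ∑ n ∈ Ioc x (x + h) with n % q ∈ Icc 1 H, f n
      - (if x % q ≤ H then ∑ n ∈ Ioc x (x + h), f n else 0) = 0 := by
  have hiff := fun n (hn : n ∈ Ioc x (x + h)) => mod_mem_Icc_iff_of_not_dvd hHq hHx hlow hhigh hn
  split_ifs with hxH
  · rw [filter_true_of_mem fun n hn => (hiff n hn).2 hxH, sub_self]
  · rw [filter_false_of_mem fun n hn hmem => hxH ((hiff n hn).1 hmem), sum_empty, sub_zero]

lemma norm_sum_sub_ite_le {f : ℕ → ℂ} {s t : Finset ℕ} (hts : t ⊆ s) (p : Prop) [Decidable p]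
    {A : ℝ} (hA : ∀ n ∈ s, ‖f n‖ ≤ A) :
    ‖∑ n ∈ t, f n - if p then ∑ n ∈ s, f n else 0‖ ≤ 2 * (#s * A) := by
  have hs : ‖∑ n ∈ s, f n‖ ≤ #s * A := by
    simpa using norm_sum_le_of_le s hA
  have ht : ‖∑ n ∈ t, f n‖ ≤ #s * A :=
    (norm_sum_le _ _).trans <| (sum_le_sum_of_subset_of_nonneg hts fun _ _ _ => norm_nonneg _).trans
      (by simpa using sum_le_sum hA)
  refine (norm_sub_le _ _).trans ?_
  split_ifs
  · linarith
  · rw [norm_zero]; linarith [(norm_nonneg _).trans ht]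

lemma card_filter_exists_dvd_le (t M : Finset ℕ) (hM : 0 ∉ M) :
    #{q ∈ t | ∃ m ∈ M, q ∣ m} ≤ ∑ m ∈ M, #m.divisors := by
  refine (card_le_card fun q hq => ?_).trans card_biUnion_le
  obtain ⟨m, hm, hqm⟩ := (mem_filter.1 hq).2
  exact mem_biUnion.2 ⟨m, hm, Nat.mem_divisors.2 ⟨hqm, ne_of_mem_of_not_mem hm hM⟩⟩

theorem norm_pinch_error_le {f g : ℕ → ℂ} {x h H Q N : ℕ} {A B D : ℝ} (hHx : H < x)
    (hxN : x + h ≤ N) (hQN : Q ≤ N) (hf : ∀ n ∈ Icc 1 N, ‖f n‖ ≤ A)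
    (hg : ∀ q ∈ Icc 1 N, ‖g q‖ ≤ B) (hD : ∀ m ∈ Icc 1 N, (#m.divisors : ℝ) ≤ D) :
    ‖∑ a ∈ Icc 1 H, ∑ q ∈ Ioc H Q, g q * ∑ n ∈ Ioc x (x + h) with n % q = a % q, f n
        - (∑ q ∈ (Ioc H Q).filter (fun q : ℕ => Int.fract ((x : ℝ) / (q : ℝ)) ≤ (H : ℝ) / (q : ℝ)),
          g q) * ∑ n ∈ Ioc x (x + h), f n‖
      ≤ 4 * D * B * A * h ^ 2 := by
  set s := Ioc x (x + h)
  set bad := Ico (x - H) (x - H + h) ∪ s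
  have hbad : ∀ m ∈ bad, m ∈ Icc 1 N := by
    intro m hm
    rcases mem_union.1 hm with hm | hm <;> [have := mem_Ico.1 hm; have := mem_Ioc.1 hm] <;>
      exact mem_Icc.2 ⟨by omega, by omega⟩
  have hone : 1 ∈ Icc 1 N := mem_Icc.2 ⟨le_rfl, by omega⟩
  have hA : 0 ≤ A := (norm_nonneg _).trans (hf 1 hone)
  have hB : 0 ≤ B := (norm_nonneg _).trans (hg 1 hone)
  have hD0 : 0 ≤ D := (Nat.cast_nonneg _).trans (hD 1 hone)
  have hcard : (#{q ∈ Ioc H Q | ∃ m ∈ bad, q ∣ m} : ℝ) ≤ 2 * h * D := by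
    have hbad0 : 0 ∉ bad := fun h0 => by simpa using hbad 0 h0
    calc (#{q ∈ Ioc H Q | ∃ m ∈ bad, q ∣ m} : ℝ) ≤ ∑ m ∈ bad, (#m.divisors : ℝ) := by
          exact_mod_cast card_filter_exists_dvd_le _ _ hbad0
      _ ≤ #bad * D := by simpa using sum_le_sum fun m hm => hD m (hbad m hm)
      _ ≤ 2 * h * D := by
          gcongr
          have hunion : #bad ≤ #(Ico (x - H) (x - H + h)) + #s := card_union_le _ _
          rw [Nat.card_Ico, Nat.card_Ioc] at hunion
          exact_mod_cast (by omega : #bad ≤ 2 * h)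
  have hgood : ∀ q ∈ Ioc H Q, ¬(∃ m ∈ bad, q ∣ m) →
      g q * (∑ n ∈ s with n % q ∈ Icc 1 H, f n - if x % q ≤ H then ∑ n ∈ s, f n else 0) = 0 := by
    intro q hq hq_good
    simp only [not_exists, not_and] at hq_good
    rw [sum_filter_mod_sub_ite_eq_zero f (mem_Ioc.1 hq).1 hHx.le
      (fun m hm => hq_good m (mem_union_left _ hm)) (fun m hm => hq_good m (mem_union_right _ hm)),
      mul_zero]
  rw [pinch_error_eq, ← sum_filter_of_ne fun q hq hne => not_not.1 fun h => hne (hgood q hq h)]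
  have hterm : ∀ q ∈ {q ∈ Ioc H Q | ∃ m ∈ bad, q ∣ m},
      ‖g q * (∑ n ∈ s with n % q ∈ Icc 1 H, f n - if x % q ≤ H then ∑ n ∈ s, f n else 0)‖
        ≤ B * (2 * (h * A)) := by
    intro q hq
    have hqQ := mem_Ioc.1 (mem_filter.1 hq).1
    rw [norm_mul]
    refine mul_le_mul (hg q (mem_Icc.2 ⟨by omega, by omega⟩)) ?_ (norm_nonneg _) hB
    simpa [s] using norm_sum_sub_ite_le (filter_subset _ s) (x % q ≤ H)
      fun n hn => hf n (hbad n (mem_union_right _ hn))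
  calc _ ≤ ∑ q ∈ {q ∈ Ioc H Q | ∃ m ∈ bad, q ∣ m}, B * (2 * (h * A)) := norm_sum_le_of_le _ hterm
    _ ≤ 2 * h * D * (B * (2 * (h * A))) := by
        rw [sum_const, nsmul_eq_mul]
        gcongr
    _ = 4 * D * B * A * h ^ 2 := by ring

theorem pinch_lemma_second_general
    (h H Q x : ℕ → ℕ) (hx : ∀ i, 0 < x i)
    (hhH : ∀ i, h i ≤ H i)
    (hQx : (fun i => (Q i : ℝ)) =O[atTop] (fun i => (x i : ℝ)))
    (hHx : (fun i => (H i : ℝ)) =o[atTop] (fun i => (x i : ℝ)))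
    (f g' : ℕ → ℂ) (hf : EssBdd f) (hg' : EssBdd g')
    (ε : ℝ) (hε : 0 < ε) :
    (fun i =>
        (∑ a ∈ Finset.Icc 1 (H i), ∑ q ∈ Finset.Ioc (H i) (Q i),
            g' q * ∑ n ∈ (Finset.Ioc (x i) (x i + h i)).filter (fun n => n % q = a % q), f n)
          - (∑ q ∈ (Finset.Ioc (H i) (Q i)).filter
                (fun q : ℕ => Int.fract ((x i : ℝ) / (q : ℝ)) ≤ (H i : ℝ) / (q : ℝ)), g' q) *
              (∑ n ∈ Finset.Ioc (x i) (x i + h i), f n))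
      =O[atTop] (fun i => (x i : ℝ) ^ ε * (h i : ℝ) ^ 2) := by
  have hδ : 0 < ε / 3 := by positivity
  obtain ⟨Cf, hCf⟩ := hf.exists_norm_le_mul_rpow hδ
  obtain ⟨Cg, hCg⟩ := hg'.exists_norm_le_mul_rpow hδ
  obtain ⟨Cd, hCd⟩ := essBdd_card_divisors.exists_norm_le_mul_rpow hδ
  let N : ℕ → ℕ := fun i => 2 * x i + Q i
  have hHx_lt : ∀ᶠ i in atTop, H i < x i := by
    filter_upwards [hHx.def one_half_pos] with i hi
    have hxi : (0 : ℝ) < x i := by exact_mod_cast hx i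
    rw [Real.norm_natCast, Real.norm_natCast] at hi
    exact_mod_cast (show (H i : ℝ) < x i by linarith)
  have hNx : (fun i => (N i : ℝ)) =O[atTop] fun i => (x i : ℝ) := by
    simpa [N] using ((isBigO_refl _ _).const_mul_left 2).add hQx
  calc _ =O[atTop] fun i => 4 * Cd * Cg * Cf * (((N i : ℝ) ^ (ε / 3)) ^ 3 * (h i : ℝ) ^ 2) := by
        refine .of_norm_eventuallyLE ?_
        filter_upwards [hHx_lt] with i hi
        exact (norm_pinch_error_le hi (show _ ≤ 2 * x i + Q i by have := hhH i; omega)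
          (show _ ≤ 2 * x i + Q i by omega) (hCf (N i)) (hCg (N i))
          (fun m hm => by simpa using hCd (N i) m hm)).trans_eq (by ring)
    _ =O[atTop] fun i => ((N i : ℝ) ^ (ε / 3)) ^ 3 * (h i : ℝ) ^ 2 :=
        (isBigO_refl _ _).const_mul_left _
    _ =O[atTop] fun i => ((x i : ℝ) ^ (ε / 3)) ^ 3 * (h i : ℝ) ^ 2 :=
        ((hNx.rpow hδ.le (.of_forall fun i => by positivity)).pow 3).mul (isBigO_refl _ _)
    _ = fun i => (x i : ℝ) ^ ε * (h i : ℝ) ^ 2 := by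
        funext i
        rw [← Real.rpow_natCast, ← Real.rpow_mul (by positivity)]
        norm_num

/-- Second formula of the Pinch Lemma. -/
theorem pinch_lemma_second
    (h H Q x : ℕ → ℕ) (hh : ∀ i, 0 < h i) (hx : ∀ i, 0 < x i)
    (hhH : ∀ i, h i ≤ H i) (hHQ : ∀ i, H i < Q i)
    (hQx : (fun i => (Q i : ℝ)) =O[atTop] (fun i => (x i : ℝ)))
    (hHx : (fun i => (H i : ℝ)) =o[atTop] (fun i => (x i : ℝ)))
    (f g' : ℕ → ℂ) (hf : EssBdd f) (hg' : EssBdd g')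
    (ε : ℝ) (hε : 0 < ε) :
    (fun i =>
        (∑ a ∈ Finset.Icc 1 (H i), ∑ q ∈ Finset.Ioc (H i) (Q i),
            g' q * ∑ n ∈ (Finset.Ioc (x i) (x i + h i)).filter (fun n => n % q = a % q), f n)
          - (∑ q ∈ (Finset.Ioc (H i) (Q i)).filter
                (fun q : ℕ => Int.fract ((x i : ℝ) / (q : ℝ)) ≤ (H i : ℝ) / (q : ℝ)), g' q) *
              (∑ n ∈ Finset.Ioc (x i) (x i + h i), f n))
      =O[atTop] (fun i => (x i : ℝ) ^ ε * (h i : ℝ) ^ 2) :=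
  pinch_lemma_second_general h H Q x hx hhH hQx hHx f g' hf hg' ε hε
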